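/- arXiv:1912.07311 — 2 statements merged into one kernel-verified Lean document; each statement's English description precedes it below -/
import Mathlib

section
/- Let u ∈ ℝ^N, φ_{abc} = u_a·δ_{bc}, D' = λ_d + λ_p·(N·α₁ + α₂ + α₃) + N^{1/2}·λ_t, and assume the solution condition λ₂ + (D'/N²)·|u|² = 0. Then the Hessian of V at φ has the following zero modes: (1) for any antisymmetric matrix A ∈ ℝ^{N×N} (A_{bc} = −A_{cb}), the tensor field χ_{abc} = u_a·A_{bc} satisfies H(φ)χ = 0; (2) for any u' ∈ ℝ^N with ⟨u',u⟩ = 0, the tensor field χ'_{abc} = u'_a·δ_{bc} satisfies H(φ)χ' = 0. -/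
open Finset

/-- The potential of the quartic `O(N)^3` tensor model. -/
noncomputable def potV (N : ℕ) (l2 ld lp lt a1 a2 a3 : ℝ)
    (φ : Fin N → Fin N → Fin N → ℝ) : ℝ :=
  l2 / 2 * (∑ a, ∑ b, ∑ c, (φ a b c) ^ 2)
  + ld / (4 * (N : ℝ) ^ 3) * (∑ a, ∑ b, ∑ c, (φ a b c) ^ 2) ^ 2
  + lp / (4 * (N : ℝ) ^ 2) *
      (a1 * ∑ a, ∑ b, ∑ c, ∑ a', ∑ b', ∑ c',
          φ a b c * φ a b' c' * φ a' b' c' * φ a' b c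
       + a2 * ∑ a, ∑ b, ∑ c, ∑ a', ∑ b', ∑ c',
          φ a b c * φ a' b c' * φ a' b' c' * φ a b' c
       + a3 * ∑ a, ∑ b, ∑ c, ∑ a', ∑ b', ∑ c',
          φ a b c * φ a' b' c * φ a' b' c' * φ a b c')
  + lt / (4 * (N : ℝ) ^ ((3 : ℝ) / 2)) *
      ∑ a, ∑ b, ∑ c, ∑ a', ∑ b', ∑ c',
        φ a b c * φ a b' c' * φ a' b c' * φ a' b' c

/-- The field equations of the quartic `O(N)^3` tensor model (vanishing gradient of `potV`). -/
def FieldEqs (N : ℕ) (l2 ld lp lt a1 a2 a3 : ℝ)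
    (φ : Fin N → Fin N → Fin N → ℝ) : Prop :=
  ∀ a b c,
    l2 * φ a b c
    + ld / (N : ℝ) ^ 3 * (∑ a', ∑ b', ∑ c', (φ a' b' c') ^ 2) * φ a b c
    + lp / (N : ℝ) ^ 2 *
        (a1 * ∑ a', ∑ b', ∑ c', φ a b' c' * φ a' b' c' * φ a' b c
         + a2 * ∑ a', ∑ b', ∑ c', φ a' b c' * φ a' b' c' * φ a b' c
         + a3 * ∑ a', ∑ b', ∑ c', φ a' b' c * φ a' b' c' * φ a b c')
    + lt / (N : ℝ) ^ ((3 : ℝ) / 2) *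
        ∑ a', ∑ b', ∑ c', φ a b' c' * φ a' b c' * φ a' b' c = 0

/-- The Hessian of `potV` at `φ` (the matrix of second partial derivatives
`H(φ)_{abc,a'b'c'} = ∂²V/∂φ_{abc}∂φ_{a'b'c'}`), acting on a tensor field `χ` by
`(H(φ)χ)_{abc} = Σ_{a'b'c'} H(φ)_{abc,a'b'c'} χ_{a'b'c'}`. -/
noncomputable def hessApply (N : ℕ) (l2 ld lp lt a1 a2 a3 : ℝ)
    (φ χ : Fin N → Fin N → Fin N → ℝ) : Fin N → Fin N → Fin N → ℝ :=
  fun a b c =>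
    deriv (fun s : ℝ =>
      deriv (fun t : ℝ =>
        potV N l2 ld lp lt a1 a2 a3
          (fun a' b' c' => φ a' b' c' + t * χ a' b' c'
            + s * (if a' = a ∧ b' = b ∧ c' = c then (1 : ℝ) else 0))) 0) 0


/-!
The potential is `λ₂/2 ⟨φ, φ⟩ + Q(φ, φ, φ, φ)` with `Q` a 4-linear form, so the Hessian at `φ` in the
directions `χ` and `e` is `λ₂ ⟨χ, e⟩` plus the twelve evaluations of `Q` with `χ` and `e` in two
distinct slots and `φ` in the other two. The background `u ⊗ δ`, the candidate modes `w ⊗ M` and the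
basis tensors are all of the form `v ⊗ K` (vector times matrix), and on such tensors every quartic
invariant factorises into inner products of the vectors times a contraction of the matrices. This gives
`H(u ⊗ δ)(w ⊗ M)` in closed form; for `(w, M) = (u, A)` with `A` antisymmetric and for
`(w, M) = (u', δ)` with `u' ⊥ u` it is a multiple of `λ₂ + (D'/N²)|u|²`, which vanishes.
-/

section QuarticForm

variable {E : Type*} [AddCommGroup E] [Module ℝ E]

/-- A 4-linear form, axiomatised by the two properties needed to differentiate `P x x x x` twice. -/
structure IsQuarticForm (P : E → E → E → E → ℝ) : Prop where
  hasDerivAt_line : ∀ x₁ x₂ x₃ x₄ y₁ y₂ y₃ y₄ : E,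
    HasDerivAt (fun s : ℝ => P (x₁ + s • y₁) (x₂ + s • y₂) (x₃ + s • y₃) (x₄ + s • y₄))
      (P y₁ x₂ x₃ x₄ + P x₁ y₂ x₃ x₄ + P x₁ x₂ y₃ x₄ + P x₁ x₂ x₃ y₄) 0
  zero_first : ∀ x₂ x₃ x₄, P 0 x₂ x₃ x₄ = 0
  zero_second : ∀ x₁ x₃ x₄, P x₁ 0 x₃ x₄ = 0
  zero_third : ∀ x₁ x₂ x₄, P x₁ x₂ 0 x₄ = 0
  zero_fourth : ∀ x₁ x₂ x₃, P x₁ x₂ x₃ 0 = 0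

def firstVariation (P : E → E → E → E → ℝ) (x y : E) : ℝ :=
  P y x x x + P x y x x + P x x y x + P x x x y

/-- `y` and `z` placed in two distinct slots of `P`, `x` in the remaining two, summed over the
twelve placements. -/
def secondVariation (P : E → E → E → E → ℝ) (x y z : E) : ℝ :=
  P y z x x + P y x z x + P y x x z + P z y x x + P x y z x + P x y x z
    + P z x y x + P x z y x + P x x y z + P z x x y + P x z x y + P x x z y

namespace IsQuarticForm

variable {P Q : E → E → E → E → ℝ}

theorem add (hP : IsQuarticForm P) (hQ : IsQuarticForm Q) :
    IsQuarticForm fun w x y z => P w x y z + Q w x y z where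
  hasDerivAt_line x₁ x₂ x₃ x₄ y₁ y₂ y₃ y₄ :=
    ((hP.hasDerivAt_line x₁ x₂ x₃ x₄ y₁ y₂ y₃ y₄).add
      (hQ.hasDerivAt_line x₁ x₂ x₃ x₄ y₁ y₂ y₃ y₄)).congr_deriv (by ring)
  zero_first _ _ _ := by simp [hP.zero_first, hQ.zero_first]
  zero_second _ _ _ := by simp [hP.zero_second, hQ.zero_second]
  zero_third _ _ _ := by simp [hP.zero_third, hQ.zero_third]
  zero_fourth _ _ _ := by simp [hP.zero_fourth, hQ.zero_fourth]

theorem const_mul (hP : IsQuarticForm P) (c : ℝ) :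
    IsQuarticForm fun w x y z => c * P w x y z where
  hasDerivAt_line x₁ x₂ x₃ x₄ y₁ y₂ y₃ y₄ :=
    ((hP.hasDerivAt_line x₁ x₂ x₃ x₄ y₁ y₂ y₃ y₄).const_mul c).congr_deriv (by ring)
  zero_first _ _ _ := by simp [hP.zero_first]
  zero_second _ _ _ := by simp [hP.zero_second]
  zero_third _ _ _ := by simp [hP.zero_third]
  zero_fourth _ _ _ := by simp [hP.zero_fourth]

theorem hasDerivAt_firstVariation (hP : IsQuarticForm P) (x y : E) :
    HasDerivAt (fun t : ℝ => P (x + t • y) (x + t • y) (x + t • y) (x + t • y))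
      (firstVariation P x y) 0 :=
  hP.hasDerivAt_line x x x x y y y y

theorem hasDerivAt_secondVariation (hP : IsQuarticForm P) (x y z : E) :
    HasDerivAt (fun s : ℝ => firstVariation P (x + s • z) y) (secondVariation P x y z) 0 := by
  have h := (((hP.hasDerivAt_line y x x x 0 z z z).add (hP.hasDerivAt_line x y x x z 0 z z)).add
    (hP.hasDerivAt_line x x y x z z 0 z)).add (hP.hasDerivAt_line x x x y z z z 0)
  simp only [smul_zero, add_zero, hP.zero_first, hP.zero_second, hP.zero_third,
    hP.zero_fourth, zero_add] at h
  exact h.congr_deriv (by simp only [secondVariation]; ring)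

end IsQuarticForm

end QuarticForm

theorem deriv_deriv_eq_of_hasDerivAt {f : ℝ → ℝ → ℝ} {g : ℝ → ℝ} {h : ℝ}
    (hf : ∀ s, HasDerivAt (f s) (g s) 0) (hg : HasDerivAt g h 0) :
    deriv (fun s => deriv (f s) 0) 0 = h := by
  simp only [fun s => (hf s).deriv]
  exact hg.deriv

theorem hasDerivAt_mul_line (x₁ x₂ y₁ y₂ : ℝ) :
    HasDerivAt (fun s : ℝ => (x₁ + s * y₁) * (x₂ + s * y₂)) (y₁ * x₂ + x₁ * y₂) 0 := by
  have h₁ : HasDerivAt (fun s : ℝ => x₁ + s * y₁) y₁ 0 := by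
    simpa using ((hasDerivAt_id (0 : ℝ)).mul_const y₁).const_add x₁
  have h₂ : HasDerivAt (fun s : ℝ => x₂ + s * y₂) y₂ 0 := by
    simpa using ((hasDerivAt_id (0 : ℝ)).mul_const y₂).const_add x₂
  simpa using h₁.fun_mul h₂

theorem hasDerivAt_mul₄_line (x₁ x₂ x₃ x₄ y₁ y₂ y₃ y₄ : ℝ) :
    HasDerivAt (fun s : ℝ => (x₁ + s * y₁) * (x₂ + s * y₂) * (x₃ + s * y₃) * (x₄ + s * y₄))
      (y₁ * x₂ * x₃ * x₄ + x₁ * y₂ * x₃ * x₄ + x₁ * x₂ * y₃ * x₄ + x₁ * x₂ * x₃ * y₄) 0 := by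
  have h := (hasDerivAt_mul_line x₁ x₂ y₁ y₂).fun_mul (hasDerivAt_mul_line x₃ x₄ y₃ y₄)
  simp only [zero_mul, add_zero] at h
  exact (h.congr_deriv (by ring)).congr_of_eventuallyEq (.of_forall fun s => by ring)

section FiniteSums

variable {ι : Type*} [Fintype ι]

theorem hasDerivAt_sum₃ {f : ι → ι → ι → ℝ → ℝ} {f' : ι → ι → ι → ℝ}
    (h : ∀ a b c, HasDerivAt (f a b c) (f' a b c) 0) :
    HasDerivAt (fun s => ∑ a, ∑ b, ∑ c, f a b c s) (∑ a, ∑ b, ∑ c, f' a b c) 0 :=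
  HasDerivAt.fun_sum fun a _ => HasDerivAt.fun_sum fun b _ => HasDerivAt.fun_sum fun c _ => h a b c

theorem hasDerivAt_sum₆ {f : ι → ι → ι → ι → ι → ι → ℝ → ℝ} {f' : ι → ι → ι → ι → ι → ι → ℝ}
    (h : ∀ a b c a' b' c', HasDerivAt (f a b c a' b' c') (f' a b c a' b' c') 0) :
    HasDerivAt (fun s => ∑ a, ∑ b, ∑ c, ∑ a', ∑ b', ∑ c', f a b c a' b' c' s)
      (∑ a, ∑ b, ∑ c, ∑ a', ∑ b', ∑ c', f' a b c a' b' c') 0 :=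
  hasDerivAt_sum₃ fun a b c => hasDerivAt_sum₃ fun a' b' c' => h a b c a' b' c'

end FiniteSums

abbrev Tensor3 (N : ℕ) := Fin N → Fin N → Fin N → ℝ

namespace Tensor3

variable {N : ℕ}

def dot (x y : Tensor3 N) : ℝ := ∑ a, ∑ b, ∑ c, x a b c * y a b c

def doubleTrace (w x y z : Tensor3 N) : ℝ := dot w x * dot y z

def pillow₁ (w x y z : Tensor3 N) : ℝ :=
  ∑ a, ∑ b, ∑ c, ∑ a', ∑ b', ∑ c', w a b c * x a b' c' * y a' b' c' * z a' b c

def pillow₂ (w x y z : Tensor3 N) : ℝ :=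
  ∑ a, ∑ b, ∑ c, ∑ a', ∑ b', ∑ c', w a b c * x a' b c' * y a' b' c' * z a b' c

def pillow₃ (w x y z : Tensor3 N) : ℝ :=
  ∑ a, ∑ b, ∑ c, ∑ a', ∑ b', ∑ c', w a b c * x a' b' c * y a' b' c' * z a b c'

def tetrahedron (w x y z : Tensor3 N) : ℝ :=
  ∑ a, ∑ b, ∑ c, ∑ a', ∑ b', ∑ c', w a b c * x a b' c' * y a' b c' * z a' b' c

def basis (a b c : Fin N) : Tensor3 N :=
  fun a' b' c' => if a' = a ∧ b' = b ∧ c' = c then 1 else 0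

def outer (v : Fin N → ℝ) (K : Matrix (Fin N) (Fin N) ℝ) : Tensor3 N := fun a b c => v a * K b c

theorem dot_comm (x y : Tensor3 N) : dot x y = dot y x := by
  simp only [dot, mul_comm]

@[simp] theorem dot_zero (x : Tensor3 N) : dot x 0 = 0 := by simp [dot]

@[simp] theorem zero_dot (x : Tensor3 N) : dot 0 x = 0 := by simp [dot]

theorem hasDerivAt_dot_line (x₁ x₂ y₁ y₂ : Tensor3 N) :
    HasDerivAt (fun s : ℝ => dot (x₁ + s • y₁) (x₂ + s • y₂)) (dot y₁ x₂ + dot x₁ y₂) 0 := by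
  have h := hasDerivAt_sum₃ fun a b c =>
    hasDerivAt_mul_line (x₁ a b c) (x₂ a b c) (y₁ a b c) (y₂ a b c)
  simpa [dot, Finset.sum_add_distrib] using h

theorem isQuarticForm_doubleTrace : IsQuarticForm (doubleTrace (N := N)) where
  hasDerivAt_line x₁ x₂ x₃ x₄ y₁ y₂ y₃ y₄ :=
    ((hasDerivAt_dot_line x₁ x₂ y₁ y₂).mul (hasDerivAt_dot_line x₃ x₄ y₃ y₄)).congr_deriv
      (by simp only [doubleTrace, zero_smul, add_zero]; ring)
  zero_first _ _ _ := by simp [doubleTrace]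
  zero_second _ _ _ := by simp [doubleTrace]
  zero_third _ _ _ := by simp [doubleTrace]
  zero_fourth _ _ _ := by simp [doubleTrace]

theorem isQuarticForm_pillow₁ : IsQuarticForm (pillow₁ (N := N)) where
  hasDerivAt_line x₁ x₂ x₃ x₄ y₁ y₂ y₃ y₄ := by
    have h := hasDerivAt_sum₆ fun a b c a' b' c' =>
        hasDerivAt_mul₄_line (x₁ a b c) (x₂ a b' c') (x₃ a' b' c') (x₄ a' b c)
          (y₁ a b c) (y₂ a b' c') (y₃ a' b' c') (y₄ a' b c)
    simpa [pillow₁, Finset.sum_add_distrib] using h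
  zero_first _ _ _ := by simp [pillow₁]
  zero_second _ _ _ := by simp [pillow₁]
  zero_third _ _ _ := by simp [pillow₁]
  zero_fourth _ _ _ := by simp [pillow₁]

theorem isQuarticForm_pillow₂ : IsQuarticForm (pillow₂ (N := N)) where
  hasDerivAt_line x₁ x₂ x₃ x₄ y₁ y₂ y₃ y₄ := by
    have h := hasDerivAt_sum₆ fun a b c a' b' c' =>
        hasDerivAt_mul₄_line (x₁ a b c) (x₂ a' b c') (x₃ a' b' c') (x₄ a b' c)
          (y₁ a b c) (y₂ a' b c') (y₃ a' b' c') (y₄ a b' c)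
    simpa [pillow₂, Finset.sum_add_distrib] using h
  zero_first _ _ _ := by simp [pillow₂]
  zero_second _ _ _ := by simp [pillow₂]
  zero_third _ _ _ := by simp [pillow₂]
  zero_fourth _ _ _ := by simp [pillow₂]

theorem isQuarticForm_pillow₃ : IsQuarticForm (pillow₃ (N := N)) where
  hasDerivAt_line x₁ x₂ x₃ x₄ y₁ y₂ y₃ y₄ := by
    have h := hasDerivAt_sum₆ fun a b c a' b' c' =>
        hasDerivAt_mul₄_line (x₁ a b c) (x₂ a' b' c) (x₃ a' b' c') (x₄ a b c')
          (y₁ a b c) (y₂ a' b' c) (y₃ a' b' c') (y₄ a b c')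
    simpa [pillow₃, Finset.sum_add_distrib] using h
  zero_first _ _ _ := by simp [pillow₃]
  zero_second _ _ _ := by simp [pillow₃]
  zero_third _ _ _ := by simp [pillow₃]
  zero_fourth _ _ _ := by simp [pillow₃]

theorem isQuarticForm_tetrahedron : IsQuarticForm (tetrahedron (N := N)) where
  hasDerivAt_line x₁ x₂ x₃ x₄ y₁ y₂ y₃ y₄ := by
    have h := hasDerivAt_sum₆ fun a b c a' b' c' =>
        hasDerivAt_mul₄_line (x₁ a b c) (x₂ a b' c') (x₃ a' b c') (x₄ a' b' c)
          (y₁ a b c) (y₂ a b' c') (y₃ a' b c') (y₄ a' b' c)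
    simpa [tetrahedron, Finset.sum_add_distrib] using h
  zero_first _ _ _ := by simp [tetrahedron]
  zero_second _ _ _ := by simp [tetrahedron]
  zero_third _ _ _ := by simp [tetrahedron]
  zero_fourth _ _ _ := by simp [tetrahedron]

theorem basis_eq_outer (a b c : Fin N) :
    basis a b c = outer (Pi.single a 1) (Matrix.single b c 1) := by
  funext a' b' c'
  simp only [basis, outer, Pi.single_apply, Matrix.single_apply]
  split_ifs <;> simp_all

section Factorization

variable (v₁ v₂ v₃ v₄ : Fin N → ℝ) (K₁ K₂ K₃ K₄ : Matrix (Fin N) (Fin N) ℝ)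

theorem dot_outer :
    dot (outer v₁ K₁) (outer v₂ K₂) = (v₁ ⬝ᵥ v₂) * ∑ b, ∑ c, K₁ b c * K₂ b c := by
  have h : ∀ a b c, v₁ a * K₁ b c * (v₂ a * K₂ b c) = v₁ a * v₂ a * (K₁ b c * K₂ b c) :=
    fun _ _ _ => by ring
  simp only [dot, outer, h, ← Finset.mul_sum, ← Finset.sum_mul, dotProduct]

theorem pillow₁_outer :
    pillow₁ (outer v₁ K₁) (outer v₂ K₂) (outer v₃ K₃) (outer v₄ K₄) =
      (v₁ ⬝ᵥ v₂) * (v₃ ⬝ᵥ v₄) *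
        ((∑ b, ∑ c, K₁ b c * K₄ b c) * ∑ b, ∑ c, K₂ b c * K₃ b c) := by
  have h : ∀ a b c a' b' c', v₁ a * K₁ b c * (v₂ a * K₂ b' c') * (v₃ a' * K₃ b' c') *
      (v₄ a' * K₄ b c) =
        v₁ a * v₂ a * (K₁ b c * K₄ b c * (v₃ a' * v₄ a' * (K₂ b' c' * K₃ b' c'))) :=
    fun _ _ _ _ _ _ => by ring
  simp only [pillow₁, outer, h, ← Finset.mul_sum, ← Finset.sum_mul, dotProduct]
  ring

theorem pillow₂_outer :
    pillow₂ (outer v₁ K₁) (outer v₂ K₂) (outer v₃ K₃) (outer v₄ K₄) =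
      (v₁ ⬝ᵥ v₄) * (v₂ ⬝ᵥ v₃) *
        ∑ b, ∑ c, ∑ b', ∑ c', K₁ b c * K₂ b c' * K₃ b' c' * K₄ b' c := by
  have h : ∀ a b c a' b' c', v₁ a * K₁ b c * (v₂ a' * K₂ b c') * (v₃ a' * K₃ b' c') *
      (v₄ a * K₄ b' c) =
        v₁ a * v₄ a * (v₂ a' * v₃ a' * (K₁ b c * K₂ b c' * K₃ b' c' * K₄ b' c)) :=
    fun _ _ _ _ _ _ => by ring
  simp only [pillow₂, outer, h, ← Finset.mul_sum, ← Finset.sum_mul, dotProduct]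
  ring

theorem pillow₃_outer :
    pillow₃ (outer v₁ K₁) (outer v₂ K₂) (outer v₃ K₃) (outer v₄ K₄) =
      (v₁ ⬝ᵥ v₄) * (v₂ ⬝ᵥ v₃) *
        ∑ b, ∑ c, ∑ b', ∑ c', K₁ b c * K₂ b' c * K₃ b' c' * K₄ b c' := by
  have h : ∀ a b c a' b' c', v₁ a * K₁ b c * (v₂ a' * K₂ b' c) * (v₃ a' * K₃ b' c') *
      (v₄ a * K₄ b c') =
        v₁ a * v₄ a * (v₂ a' * v₃ a' * (K₁ b c * K₂ b' c * K₃ b' c' * K₄ b c')) :=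
    fun _ _ _ _ _ _ => by ring
  simp only [pillow₃, outer, h, ← Finset.mul_sum, ← Finset.sum_mul, dotProduct]
  ring

theorem tetrahedron_outer :
    tetrahedron (outer v₁ K₁) (outer v₂ K₂) (outer v₃ K₃) (outer v₄ K₄) =
      (v₁ ⬝ᵥ v₂) * (v₃ ⬝ᵥ v₄) *
        ∑ b, ∑ c, ∑ b', ∑ c', K₁ b c * K₂ b' c' * K₃ b c' * K₄ b' c := by
  have h : ∀ a b c a' b' c', v₁ a * K₁ b c * (v₂ a * K₂ b' c') * (v₃ a' * K₃ b c') *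
      (v₄ a' * K₄ b' c) =
        v₁ a * v₂ a * (v₃ a' * v₄ a' * (K₁ b c * K₂ b' c' * K₃ b c' * K₄ b' c)) :=
    fun _ _ _ _ _ _ => by ring
  simp only [tetrahedron, outer, h, ← Finset.mul_sum, ← Finset.sum_mul, dotProduct]
  ring

end Factorization

end Tensor3

open Tensor3

noncomputable def interaction (N : ℕ) (ld lp lt a1 a2 a3 : ℝ) (w x y z : Tensor3 N) : ℝ :=
  ld / (4 * (N : ℝ) ^ 3) * doubleTrace w x y z
  + lp / (4 * (N : ℝ) ^ 2) *
      (a1 * pillow₁ w x y z + a2 * pillow₂ w x y z + a3 * pillow₃ w x y z)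
  + lt / (4 * (N : ℝ) ^ ((3 : ℝ) / 2)) * tetrahedron w x y z

theorem isQuarticForm_interaction (N : ℕ) (ld lp lt a1 a2 a3 : ℝ) :
    IsQuarticForm (interaction N ld lp lt a1 a2 a3) :=
  ((isQuarticForm_doubleTrace.const_mul _).add
    ((((isQuarticForm_pillow₁.const_mul a1).add (isQuarticForm_pillow₂.const_mul a2)).add
      (isQuarticForm_pillow₃.const_mul a3)).const_mul _)).add
    (isQuarticForm_tetrahedron.const_mul _)

theorem potV_eq (N : ℕ) (l2 ld lp lt a1 a2 a3 : ℝ) (ψ : Tensor3 N) :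
    potV N l2 ld lp lt a1 a2 a3 ψ = l2 / 2 * dot ψ ψ + interaction N ld lp lt a1 a2 a3 ψ ψ ψ ψ := by
  simp only [potV, interaction, doubleTrace, dot, pillow₁, pillow₂, pillow₃, tetrahedron, sq]
  ring

theorem hessApply_eq (N : ℕ) (l2 ld lp lt a1 a2 a3 : ℝ) (φ χ : Tensor3 N) (a b c : Fin N) :
    hessApply N l2 ld lp lt a1 a2 a3 φ χ a b c =
      l2 * dot χ (basis a b c)
        + secondVariation (interaction N ld lp lt a1 a2 a3) φ χ (basis a b c) := by
  set e := basis a b c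
  have hQ := isQuarticForm_interaction N ld lp lt a1 a2 a3
  have hline : ∀ s t : ℝ, (fun a' b' c' => φ a' b' c' + t * χ a' b' c'
      + s * (if a' = a ∧ b' = b ∧ c' = c then (1 : ℝ) else 0)) = (φ + s • e) + t • χ := by
    intro s t
    funext a' b' c'
    simp only [e, basis, Pi.add_apply, Pi.smul_apply, smul_eq_mul]
    ring
  refine deriv_deriv_eq_of_hasDerivAt
    (g := fun s => l2 / 2 * (dot χ (φ + s • e) + dot (φ + s • e) χ)
      + firstVariation (interaction N ld lp lt a1 a2 a3) (φ + s • e) χ) (fun s => ?_) ?_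
  · simp only [hline, potV_eq]
    exact ((hasDerivAt_dot_line _ _ χ χ).const_mul (l2 / 2)).add
      (hQ.hasDerivAt_firstVariation _ χ)
  · have h := (((hasDerivAt_dot_line χ φ 0 e).add (hasDerivAt_dot_line φ χ e 0)).const_mul
      (l2 / 2)).add (hQ.hasDerivAt_secondVariation φ χ e)
    simp only [smul_zero, add_zero, dot_zero, zero_dot, zero_add] at h
    exact h.congr_deriv (by rw [dot_comm e χ]; ring)

open Matrix in
theorem hessApply_outer (N : ℕ) (l2 ld lp lt a1 a2 a3 : ℝ) (u w : Fin N → ℝ)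
    (M : Matrix (Fin N) (Fin N) ℝ) (a b c : Fin N) :
    hessApply N l2 ld lp lt a1 a2 a3 (outer u 1) (outer w M) a b c =
      l2 * w a * M b c
      + ld / (N : ℝ) ^ 3 * (2 * (u ⬝ᵥ w) * M.trace * u a * (1 : Matrix _ _ ℝ) b c
          + N * (u ⬝ᵥ u) * w a * M b c)
      + lp / (N : ℝ) ^ 2 *
          (a1 * (M.trace * (u ⬝ᵥ u) * w a * (1 : Matrix _ _ ℝ) b c
              + M.trace * (u ⬝ᵥ w) * u a * (1 : Matrix _ _ ℝ) b c
              + N * (u ⬝ᵥ w) * u a * M b c)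
            + (a2 + a3) * ((u ⬝ᵥ w) * u a * (M b c + Mᵀ b c) + (u ⬝ᵥ u) * w a * M b c))
      + lt / (N : ℝ) ^ ((3 : ℝ) / 2) * ((u ⬝ᵥ u) * w a * Mᵀ b c + 2 * (u ⬝ᵥ w) * u a * M b c) := by
  rw [hessApply_eq, basis_eq_outer]
  simp only [secondVariation, interaction, doubleTrace, dot_outer, pillow₁_outer, pillow₂_outer,
    pillow₃_outer, tetrahedron_outer]
  rcases eq_or_ne b c with rfl | hbc
  · simp [dotProduct_single, single_dotProduct, one_apply, single_apply, trace, ite_and,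
      dotProduct_comm w u]
    ring
  · simp [dotProduct_single, single_dotProduct, one_apply, single_apply, ite_and, hbc, hbc.symm,
      dotProduct_comm w u]
    ring

theorem expanded_solution_condition {N : ℕ} (hN : 0 < N) {l2 ld lp lt a1 a2 a3 s : ℝ}
    (hsol : l2 + (ld + lp * ((N : ℝ) * a1 + a2 + a3) + (N : ℝ) ^ ((1 : ℝ) / 2) * lt)
      / (N : ℝ) ^ 2 * s = 0) :
    l2 + ld / (N : ℝ) ^ 3 * (N * s) + lp / (N : ℝ) ^ 2 * (a1 * (N * s) + (a2 + a3) * s)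
      + lt / (N : ℝ) ^ ((3 : ℝ) / 2) * s = 0 := by
  have hN₀ : (N : ℝ) ≠ 0 := by exact_mod_cast hN.ne'
  have hrpow : (N : ℝ) ^ ((3 : ℝ) / 2) * (N : ℝ) ^ ((1 : ℝ) / 2) = (N : ℝ) ^ 2 := by
    rw [← Real.rpow_add' (Nat.cast_nonneg N) (by norm_num)]
    norm_num
  have hlt : lt / (N : ℝ) ^ ((3 : ℝ) / 2) = (N : ℝ) ^ ((1 : ℝ) / 2) * lt / (N : ℝ) ^ 2 := by
    have : (N : ℝ) ^ ((3 : ℝ) / 2) ≠ 0 := by positivity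
    rw [← hrpow]
    field_simp
  rw [hlt, ← hsol]
  field_simp
  ring

theorem vector_delta_zero_modes_general (N : ℕ)
    (l2 ld lp lt a1 a2 a3 : ℝ)
    (u : Fin N → ℝ)
    (φ : Fin N → Fin N → Fin N → ℝ)
    (hφ : φ = fun a b c => u a * (if b = c then (1 : ℝ) else 0))
    (D' : ℝ)
    (hD' : D' = ld + lp * ((N : ℝ) * a1 + a2 + a3) + (N : ℝ) ^ ((1 : ℝ) / 2) * lt)
    (hsol : l2 + D' / (N : ℝ) ^ 2 * (∑ a, (u a) ^ 2) = 0) :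
    (∀ A : Fin N → Fin N → ℝ, (∀ b c, A b c = -A c b) →
      hessApply N l2 ld lp lt a1 a2 a3 φ (fun a b c => u a * A b c) = 0)
    ∧ (∀ u' : Fin N → ℝ, (∑ a, u' a * u a) = 0 →
      hessApply N l2 ld lp lt a1 a2 a3 φ
        (fun a b c => u' a * (if b = c then (1 : ℝ) else 0)) = 0) := by
  have hδ (v : Fin N → ℝ) : (fun a b c => v a * (if b = c then (1 : ℝ) else 0)) = outer v 1 := by
    funext a b c
    simp [outer, Matrix.one_apply]
  have hmass (a : Fin N) := expanded_solution_condition a.pos (s := u ⬝ᵥ u)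
    (by simpa only [hD', dotProduct, sq] using hsol)
  subst hφ
  rw [hδ u]
  constructor
  · intro A hA
    have htrace : Matrix.trace A = 0 :=
      Finset.sum_eq_zero fun b _ => show A b b = 0 by linarith [hA b b]
    funext a b c
    rw [show (fun a b c => u a * A b c) = outer u A from rfl,
      hessApply_outer N l2 ld lp lt a1 a2 a3 u u A, htrace, Matrix.transpose_apply A b c, hA c b,
      Pi.zero_apply, Pi.zero_apply, Pi.zero_apply]
    linear_combination (u a * A b c) * hmass a
  · intro u' hu'
    have horth : u ⬝ᵥ u' = 0 := by rw [dotProduct_comm]; exact hu'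
    funext a b c
    rw [hδ u', hessApply_outer, horth, Matrix.trace_one, Fintype.card_fin,
      Matrix.transpose_one, Pi.zero_apply, Pi.zero_apply, Pi.zero_apply]
    linear_combination (u' a * (1 : Matrix _ _ ℝ) b c) * hmass a

/-- Zero modes of the Hessian at the solution `φ_{abc} = u_a δ_{bc}`: tensors `u ⊗ A` for
antisymmetric `A`, and `u' ⊗ δ` for `u' ⊥ u`. -/
theorem vector_delta_zero_modes (N : ℕ) (hN : 1 ≤ N)
    (l2 ld lp lt a1 a2 a3 : ℝ)
    (u : Fin N → ℝ)
    (φ : Fin N → Fin N → Fin N → ℝ)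
    (hφ : φ = fun a b c => u a * (if b = c then (1 : ℝ) else 0))
    (D' : ℝ)
    (hD' : D' = ld + lp * ((N : ℝ) * a1 + a2 + a3) + (N : ℝ) ^ ((1 : ℝ) / 2) * lt)
    (hsol : l2 + D' / (N : ℝ) ^ 2 * (∑ a, (u a) ^ 2) = 0) :
    (∀ A : Fin N → Fin N → ℝ, (∀ b c, A b c = -A c b) →
      hessApply N l2 ld lp lt a1 a2 a3 φ (fun a b c => u a * A b c) = 0)
    ∧ (∀ u' : Fin N → ℝ, (∑ a, u' a * u a) = 0 →
      hessApply N l2 ld lp lt a1 a2 a3 φ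
        (fun a b c => u' a * (if b = c then (1 : ℝ) else 0)) = 0) :=
  vector_delta_zero_modes_general N l2 ld lp lt a1 a2 a3 u φ hφ D' hD' hsol
end

section
/- Assume α₂ = α₃ = λ_t = 0. Let φ be a constant tensor field and ρ > 0 a real number such that Σ_{b,c} φ_{abc}·φ_{a'bc} = N²·ρ·δ_{aa'} for all a,a' (i.e. the N slices φ_{a··}, viewed as vectors in ℝ^{N²}, are pairwise orthogonal with common squared norm N²ρ). Then φ satisfies the field equations if and only if λ₂ + (λ_d + λ_p·α₁)·ρ = 0. -/
open Finset

/-- For `α₂ = α₃ = λ_t = 0` (enhanced `O(N) × O(N²)` symmetry): a tensor whose `N` slices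
are pairwise orthogonal vectors in `ℝ^{N²}` of common squared norm `N²ρ` solves the field
equations iff `λ₂ + (λ_d + λ_p α₁)ρ = 0`. -/
theorem orthogonal_slices_solution (N : ℕ) (hN : 1 ≤ N)
    (l2 ld lp lt a1 a2 a3 : ℝ)
    (ha2 : a2 = 0) (ha3 : a3 = 0) (hlt : lt = 0)
    (φ : Fin N → Fin N → Fin N → ℝ) (ρ : ℝ) (hρ : 0 < ρ)
    (horth : ∀ a a', ∑ b, ∑ c, φ a b c * φ a' b c
      = (N : ℝ) ^ 2 * ρ * (if a = a' then 1 else 0)) :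
    FieldEqs N l2 ld lp lt a1 a2 a3 φ ↔ l2 + (ld + lp * a1) * ρ = 0 := by
  subst ha2 ha3 hlt
  have hN0 : (0:ℝ) < (N:ℝ) := by exact_mod_cast Nat.lt_of_lt_of_le Nat.zero_lt_one hN
  have hS : (∑ a, ∑ b, ∑ c, (φ a b c)^2) = (N:ℝ)^3 * ρ := by
    have h1 : ∀ a : Fin N, (∑ b, ∑ c, (φ a b c)^2) = (N:ℝ)^2*ρ := by
      intro a
      have h := horth a a
      simp only [if_pos rfl, mul_one] at h
      simpa [sq] using h
    rw [Finset.sum_congr rfl (fun a _ => h1 a), Finset.sum_const, Finset.card_univ,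
      Fintype.card_fin, nsmul_eq_mul]
    ring
  have hT : ∀ a b c, (∑ a', ∑ b', ∑ c', φ a b' c' * φ a' b' c' * φ a' b c)
      = (N:ℝ)^2 * ρ * φ a b c := by
    intro a b c
    have h1 : ∀ a' : Fin N, (∑ b', ∑ c', φ a b' c' * φ a' b' c' * φ a' b c)
        = ((N:ℝ)^2*ρ*(if a = a' then 1 else 0)) * φ a' b c := by
      intro a'
      rw [← horth a a', Finset.sum_mul]
      exact Finset.sum_congr rfl (fun b' _ => (Finset.sum_mul _ _ _).symm)
    rw [Finset.sum_congr rfl (fun a' _ => h1 a')]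
    simp [mul_ite, ite_mul]
  have hkey : ∀ a b c,
      (l2 * φ a b c
      + ld / (N : ℝ) ^ 3 * (∑ a', ∑ b', ∑ c', (φ a' b' c') ^ 2) * φ a b c
      + lp / (N : ℝ) ^ 2 *
          (a1 * ∑ a', ∑ b', ∑ c', φ a b' c' * φ a' b' c' * φ a' b c
           + 0 * ∑ a', ∑ b', ∑ c', φ a' b c' * φ a' b' c' * φ a b' c
           + 0 * ∑ a', ∑ b', ∑ c', φ a' b' c * φ a' b' c' * φ a b c')
      + 0 / (N : ℝ) ^ ((3 : ℝ) / 2) *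
          ∑ a', ∑ b', ∑ c', φ a b' c' * φ a' b c' * φ a' b' c)
      = (l2 + (ld + lp * a1) * ρ) * φ a b c := by
    intro a b c
    rw [hS, hT]
    have hNne : (N:ℝ) ≠ 0 := ne_of_gt hN0
    field_simp
    ring
  constructor
  · intro h
    have a0 : Fin N := ⟨0, hN⟩
    have hpos : (0:ℝ) < ∑ b, ∑ c, φ a0 b c * φ a0 b c := by
      rw [horth a0 a0, if_pos rfl, mul_one]
      exact mul_pos (pow_pos hN0 2) hρ
    have hex : ∃ b c, φ a0 b c ≠ 0 := by
      by_contra hc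
      push_neg at hc
      have : (∑ b, ∑ c, φ a0 b c * φ a0 b c) = 0 := by
        apply Finset.sum_eq_zero; intro b _
        apply Finset.sum_eq_zero; intro c _
        rw [hc b c]; ring
      rw [this] at hpos; exact lt_irrefl _ hpos
    obtain ⟨b, c, hbc⟩ := hex
    have := h a0 b c
    rw [hkey a0 b c] at this
    rcases mul_eq_zero.mp this with h' | h'
    · exact h'
    · exact absurd h' hbc
  · intro h a b c
    rw [hkey a b c, h, zero_mul]
end
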